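/- (Theorem 2, first part) Let γ(p,q) = |det Δ_{p,q}| be the number of spanning trees of the rectangular grid graph with non-sink vertices Γ(p,q). Then for every quadruple of positive integers m, n, p, q, the number γ(p,q) divides γ(mp,nq). -/

import Mathlib

open scoped BigOperators

/-- The lattice points of the open rectangle `(0,p) × (0,q)`, as a finset of `ℤ²`. -/
noncomputable def rectPts (p q : ℕ) : Finset (ℤ × ℤ) :=
  Finset.Ioo (0 : ℤ) (p : ℤ) ×ˢ Finset.Ioo (0 : ℤ) (q : ℤ)

open Classical in
/-- The reduced Laplacian `Δ_{p,q}` of the rectangle: `4` on the diagonal, `-1`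
between lattice neighbors (points at Euclidean distance `1`), `0` otherwise. -/
noncomputable def rectLap (p q : ℕ) : Matrix (rectPts p q) (rectPts p q) ℤ :=
  fun v w => if v = w then 4
    else if ((v : ℤ × ℤ).1 - (w : ℤ × ℤ).1) ^ 2 +
            ((v : ℤ × ℤ).2 - (w : ℤ × ℤ).2) ^ 2 = 1 then -1 else 0

/-- `γ(p,q) = |det Δ_{p,q}|`, the order of the sandpile group `G(p,q)`, equal to
the number of spanning trees of the rectangular grid graph. -/
noncomputable def gammaRect (p q : ℕ) : ℤ := |(rectLap p q).det|

/-! Indexing `Γ(p,q)` by `Fin (p-1) × Fin (q-1)` turns `Δ_{p,q}` into the Kronecker sum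
`P ⊗ 1 + 1 ⊗ P'` of two path Laplacians. The path Laplacian of size `p - 1` is diagonalized by the
sine vectors `i ↦ sin ((i+1)θ_k)`, `θ_k = (k+1)π/p`, with eigenvalues `2 - 2 cos θ_k`, so
`det Δ_{p,q}` is the product of all sums of an eigenvalue for `p` and one for `q`. Since
`(k+1)π/p = m(k+1)π/(mp)`, every factor of `det Δ_{p,q}` is also a factor of `det Δ_{mp,nq}`. The
remaining factors are algebraic integers (eigenvalues of integer matrices), so the quotient of the
two determinants is a rational algebraic integer, hence an integer. -/

open Matrix Real
open scoped Kronecker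

lemma det_kroneckerSum_of_mul_eq_mul_diagonal {R m n : Type*} [CommRing R] [Fintype m]
    [Fintype n] [DecidableEq m] [DecidableEq n] {A S : Matrix m m R} {B T : Matrix n n R}
    {α : m → R} {β : n → R} (hS : IsUnit S) (hT : IsUnit T)
    (hA : A * S = S * diagonal α) (hB : B * T = T * diagonal β) :
    (A ⊗ₖ (1 : Matrix n n R) + (1 : Matrix m m R) ⊗ₖ B).det =
      ∏ ij : m × n, (α ij.1 + β ij.2) := by
  have hdiag : diagonal α ⊗ₖ (1 : Matrix n n R) + (1 : Matrix m m R) ⊗ₖ diagonal β =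
      diagonal fun ij : m × n => α ij.1 + β ij.2 := by
    rw [← diagonal_one, ← diagonal_one, diagonal_kronecker_diagonal, diagonal_kronecker_diagonal,
      diagonal_add]
    simp
  have hconj : (A ⊗ₖ (1 : Matrix n n R) + (1 : Matrix m m R) ⊗ₖ B) * (S ⊗ₖ T) =
      (S ⊗ₖ T) * diagonal fun ij : m × n => α ij.1 + β ij.2 := by
    rw [← hdiag, add_mul, mul_add, ← mul_kronecker_mul, ← mul_kronecker_mul, ← mul_kronecker_mul,
      ← mul_kronecker_mul, hA, hB]
    simp
  have hdet := congrArg det hconj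
  rw [det_mul, det_mul, det_diagonal, mul_comm] at hdet
  exact ((isUnit_iff_isUnit_det _).mp (hS.kronecker hT)).mul_left_cancel hdet

lemma isIntegral_of_mulVec_eq_smul {n K : Type*} [Fintype n] [DecidableEq n] [Field K]
    (A : Matrix n n ℤ) {v : n → K} (hv : v ≠ 0) {μ : K}
    (h : A.map (algebraMap ℤ K) *ᵥ v = μ • v) : IsIntegral ℤ μ := by
  refine ⟨A.charpoly, A.charpoly_monic, ?_⟩
  rw [Polynomial.eval₂_eq_eval_map, ← charpoly_map, eval_charpoly, ← exists_mulVec_eq_zero_iff]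
  exact ⟨v, hv, by rw [sub_mulVec, h]; simp⟩

lemma Int.dvd_of_cast_eq_mul_isIntegral {K : Type*} [Field K] [CharZero K] {a b : ℤ} {c : K}
    (hc : IsIntegral ℤ c) (h : (b : K) = a * c) : a ∣ b := by
  rcases eq_or_ne a 0 with rfl | ha
  · simp_all
  have hc_rat : ((b / a : ℚ) : K) = c := by
    rw [Rat.cast_div, Rat.cast_intCast, Rat.cast_intCast, h,
      mul_div_cancel_left₀ _ (by exact_mod_cast ha)]
  obtain ⟨z, hz⟩ := IsIntegrallyClosed.isIntegral_iff.mp <|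
    (isIntegral_algebraMap_iff (A := ℚ) (B := K) (algebraMap ℚ K).injective).mp (hc_rat ▸ hc)
  rw [algebraMap_int_eq, eq_intCast, eq_div_iff (by exact_mod_cast ha)] at hz
  exact ⟨z, by exact_mod_cast (mul_comm (a : ℚ) z ▸ hz).symm⟩

lemma Int.dvd_of_cast_eq_prod_comp_embedding {K ι κ : Type*} [Field K] [CharZero K] [Fintype ι]
    [Fintype κ] {f : ι → K} (hf : ∀ i, IsIntegral ℤ (f i)) (e : κ ↪ ι) {a b : ℤ}
    (ha : (a : K) = ∏ k, f (e k)) (hb : (b : K) = ∏ i, f i) : a ∣ b := by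
  classical
  refine Int.dvd_of_cast_eq_mul_isIntegral (c := ∏ i ∈ (Finset.univ.map e)ᶜ, f i)
    (IsIntegral.prod _ fun i _ => hf i) ?_
  rw [hb, ha, ← Finset.prod_map Finset.univ e f, Finset.prod_mul_prod_compl]

def pathLap (R : Type*) [Ring R] (n : ℕ) : Matrix (Fin n) (Fin n) R :=
  of fun i j => if i = j then 2 else if (i : ℕ) = j + 1 ∨ (j : ℕ) = i + 1 then -1 else 0

lemma pathLap_map {R S : Type*} [Ring R] [Ring S] (f : R →+* S) (n : ℕ) :
    (pathLap R n).map f = pathLap S n := by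
  ext i j
  simp only [pathLap, map_apply, of_apply]
  split_ifs <;> simp [map_ofNat f 2]

lemma pathLap_apply_eq {R : Type*} [Ring R] {n : ℕ} (i j : Fin n) :
    pathLap R n j i = (if (i : ℕ) = j then 2 else 0) - (if (i : ℕ) = j + 1 then 1 else 0)
      - (if (i : ℕ) + 1 = j then 1 else 0) := by
  simp only [pathLap, of_apply, Fin.ext_iff]
  split_ifs <;> first | omega | simp

lemma pathLap_mulVec_apply {R : Type*} [CommRing R] {n : ℕ} (f : ℕ → R) (h₀ : f 0 = 0)
    (hn : f (n + 1) = 0) (j : Fin n) :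
    (pathLap R n *ᵥ fun i => f (i + 1)) j = 2 * f (j + 1) - f j - f (j + 2) := by
  simp only [mulVec, dotProduct, pathLap_apply_eq]
  rw [Fin.sum_univ_eq_sum_range (fun i => ((if i = j then 2 else 0) -
      (if i = j + 1 then 1 else 0) - (if i + 1 = (j : ℕ) then 1 else 0)) * f (i + 1))]
  simp only [sub_mul, Finset.sum_sub_distrib, ite_mul, zero_mul, one_mul, Finset.sum_ite_eq',
    Finset.mem_range, j.isLt, if_true]
  have h_right : (if (j : ℕ) + 1 < n then f (j + 1 + 1) else 0) = f (j + 2) := by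
    split_ifs with h
    · rfl
    · rw [show (j : ℕ) + 2 = n + 1 by omega, hn]
  rw [h_right]
  obtain ⟨_ | j, hj⟩ := j
  · simp [h₀]
  · simp [Finset.sum_ite_eq', show j < n by omega]
    ring

noncomputable def pathAngle (p k : ℕ) : ℝ := (k + 1) * π / p

lemma pathAngle_mem_Ioo {p k : ℕ} (hk : k + 1 < p) : pathAngle p k ∈ Set.Ioo 0 π := by
  have hp : (0 : ℝ) < p := by exact_mod_cast (show 0 < p by omega)
  have hk' : (k + 1 : ℝ) < p := by exact_mod_cast hk
  refine ⟨by unfold pathAngle; positivity, ?_⟩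
  rw [pathAngle, div_lt_iff₀ hp]
  nlinarith [pi_pos]

lemma sin_mul_pathAngle (p k : ℕ) : sin (p * pathAngle p k) = 0 := by
  rcases eq_or_ne p 0 with rfl | hp
  · simp
  · rw [pathAngle, mul_div_cancel₀ _ (by exact_mod_cast hp), ← Nat.cast_succ, sin_nat_mul_pi]

lemma pathAngle_mul (m p k : ℕ) (hm : m ≠ 0) :
    pathAngle (m * p) (m * (k + 1) - 1) = pathAngle p k := by
  have : 1 ≤ m * (k + 1) := Nat.one_le_iff_ne_zero.mpr (by positivity)
  have hm' : (m : ℝ) ≠ 0 := by exact_mod_cast hm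
  rw [pathAngle, pathAngle, Nat.cast_sub this]
  push_cast
  rw [sub_add_cancel, mul_assoc, mul_div_mul_left _ _ hm']

noncomputable def pathEigenvalue (p : ℕ) (k : Fin (p - 1)) : ℝ := 2 - 2 * cos (pathAngle p k)

noncomputable def pathEigenvectors (p : ℕ) : Matrix (Fin (p - 1)) (Fin (p - 1)) ℝ :=
  of fun i k => sin ((i + 1) * pathAngle p k)

lemma pathLap_mulVec_pathEigenvectors (p : ℕ) (k : Fin (p - 1)) :
    pathLap ℝ (p - 1) *ᵥ (fun i => pathEigenvectors p i k) =
      pathEigenvalue p k • fun i => pathEigenvectors p i k := by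
  set θ := pathAngle p k
  have hp : p - 1 + 1 = p := by have := k.isLt; omega
  ext j
  have h := pathLap_mulVec_apply (fun i : ℕ => sin (i * θ)) (by simp)
    (by rw [hp]; exact sin_mul_pathAngle p k) j
  simp only [Nat.cast_add, Nat.cast_one, Nat.cast_ofNat] at h
  have h_sub : sin (j * θ) = sin ((j + 1) * θ - θ) := by ring_nf
  have h_add : sin ((j + 2) * θ) = sin ((j + 1) * θ + θ) := by ring_nf
  simp only [pathEigenvectors, of_apply, Pi.smul_apply, smul_eq_mul]
  rw [h, h_sub, h_add, sin_sub, sin_add, pathEigenvalue]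
  ring

lemma pathEigenvalue_injective (p : ℕ) : Function.Injective (pathEigenvalue p) := by
  intro a b hab
  have hcos : cos (pathAngle p a) = cos (pathAngle p b) := by
    unfold pathEigenvalue at hab; linarith
  have ha := pathAngle_mem_Ioo (by omega : (a : ℕ) + 1 < p)
  have hb := pathAngle_mem_Ioo (by omega : (b : ℕ) + 1 < p)
  have hθ := injOn_cos (Set.Ioo_subset_Icc_self ha) (Set.Ioo_subset_Icc_self hb) hcos
  have hp : (p : ℝ) ≠ 0 := by have := a.isLt; exact_mod_cast (by omega : p ≠ 0)
  simp only [pathAngle, div_left_inj' hp, mul_left_inj' pi_ne_zero, add_left_inj,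
    Nat.cast_inj] at hθ
  exact Fin.ext hθ

lemma pathEigenvectors_col_ne_zero (p : ℕ) (k : Fin (p - 1)) :
    (fun i => pathEigenvectors p i k) ≠ 0 := by
  have hk := k.isLt
  intro h
  have h₀ := congrFun h ⟨0, by omega⟩
  simp only [pathEigenvectors, of_apply, Pi.zero_apply, Nat.cast_zero, zero_add, one_mul] at h₀
  exact (sin_pos_of_mem_Ioo (pathAngle_mem_Ioo (by omega : (k : ℕ) + 1 < p))).ne' h₀

lemma isUnit_pathEigenvectors (p : ℕ) : IsUnit (pathEigenvectors p) := by
  rw [← linearIndependent_cols_iff_isUnit]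
  refine Module.End.eigenvectors_linearIndependent' (mulVecLin (pathLap ℝ (p - 1)))
    (pathEigenvalue p) (pathEigenvalue_injective p) _ fun k => ⟨?_, ?_⟩
  · exact Module.End.mem_eigenspace_iff.mpr (pathLap_mulVec_pathEigenvectors p k)
  · exact pathEigenvectors_col_ne_zero p k

lemma pathLap_mul_pathEigenvectors (p : ℕ) :
    pathLap ℝ (p - 1) * pathEigenvectors p =
      pathEigenvectors p * diagonal (pathEigenvalue p) := by
  ext j k
  rw [mul_diagonal, mul_comm]
  exact congrFun (pathLap_mulVec_pathEigenvectors p k) j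

lemma isIntegral_pathEigenvalue (p : ℕ) (k : Fin (p - 1)) :
    IsIntegral ℤ (pathEigenvalue p k) :=
  isIntegral_of_mulVec_eq_smul (pathLap ℤ (p - 1)) (pathEigenvectors_col_ne_zero p k)
    (by rw [pathLap_map]; exact pathLap_mulVec_pathEigenvectors p k)

lemma exists_embedding_pathEigenvalue_mul {m : ℕ} (hm : 0 < m) (p : ℕ) :
    ∃ e : Fin (p - 1) ↪ Fin (m * p - 1),
      ∀ k, pathEigenvalue (m * p) (e k) = pathEigenvalue p k := by
  have hpos : ∀ k : ℕ, 1 ≤ m * (k + 1) := fun k => Nat.one_le_iff_ne_zero.mpr (by positivity)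
  have hlt : ∀ k : Fin (p - 1), m * (k + 1) - 1 < m * p - 1 := fun k => by
    have := Nat.mul_lt_mul_of_pos_left (show (k : ℕ) + 1 < p by omega) hm
    have := hpos k
    omega
  refine ⟨⟨fun k => ⟨m * (k + 1) - 1, hlt k⟩, fun a b hab => ?_⟩, fun k => ?_⟩
  · have := hpos a; have := hpos b
    have := Nat.eq_of_mul_eq_mul_left hm (show m * (a + 1) = m * (b + 1) by simp at hab; omega)
    exact Fin.ext (by omega)
  · simp only [pathEigenvalue]
    rw [← pathAngle_mul m p k hm.ne']
    rfl

lemma int_sq_add_sq_eq_one (u v : ℤ) :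
    u ^ 2 + v ^ 2 = 1 ↔ (u = 0 ∧ (v = 1 ∨ v = -1)) ∨ ((u = 1 ∨ u = -1) ∧ v = 0) := by
  constructor
  · intro h
    have hu1 : -1 ≤ u := by nlinarith [sq_nonneg v, sq_nonneg (u + 1)]
    have hu2 : u ≤ 1 := by nlinarith [sq_nonneg v, sq_nonneg (u - 1)]
    have hv1 : -1 ≤ v := by nlinarith [sq_nonneg u, sq_nonneg (v + 1)]
    have hv2 : v ≤ 1 := by nlinarith [sq_nonneg u, sq_nonneg (v - 1)]
    interval_cases u <;> interval_cases v <;> (revert h; norm_num)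
  · rintro (⟨rfl, rfl | rfl⟩ | ⟨rfl | rfl, rfl⟩) <;> norm_num

noncomputable def gridEquiv (p q : ℕ) : Fin (p - 1) × Fin (q - 1) ≃ rectPts p q :=
  Equiv.ofBijective
    (fun jk => ⟨(((jk.1 : ℕ) : ℤ) + 1, ((jk.2 : ℕ) : ℤ) + 1), by
      simp only [rectPts, Finset.mem_product, Finset.mem_Ioo]; omega⟩) <| by
    rw [Fintype.bijective_iff_injective_and_card]
    refine ⟨fun a b hab => ?_, ?_⟩
    · simp only [Subtype.mk.injEq, Prod.mk.injEq, add_left_inj, Nat.cast_inj] at hab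
      exact Prod.ext (Fin.ext hab.1) (Fin.ext hab.2)
    · rw [Fintype.card_coe]
      simp [rectPts]

lemma rectLap_submatrix_gridEquiv (p q : ℕ) :
    (rectLap p q).submatrix (gridEquiv p q) (gridEquiv p q) =
      pathLap ℤ (p - 1) ⊗ₖ (1 : Matrix (Fin (q - 1)) (Fin (q - 1)) ℤ) +
        (1 : Matrix (Fin (p - 1)) (Fin (p - 1)) ℤ) ⊗ₖ pathLap ℤ (q - 1) := by
  ext ⟨j, k⟩ ⟨j', k'⟩
  simp only [submatrix_apply, Matrix.add_apply, kroneckerMap_apply, one_apply, pathLap, of_apply,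
    rectLap, gridEquiv, Equiv.ofBijective_apply, Subtype.mk.injEq, Prod.mk.injEq, Fin.ext_iff,
    int_sq_add_sq_eq_one]
  split_ifs <;> omega

lemma rectLap_det_eq_prod (p q : ℕ) :
    ((rectLap p q).det : ℝ) =
      ∏ jk : Fin (p - 1) × Fin (q - 1), (pathEigenvalue p jk.1 + pathEigenvalue q jk.2) := by
  rw [← det_submatrix_equiv_self (gridEquiv p q), rectLap_submatrix_gridEquiv, Int.cast_det]
  have h_real : (pathLap ℤ (p - 1) ⊗ₖ (1 : Matrix (Fin (q - 1)) (Fin (q - 1)) ℤ) +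
      (1 : Matrix (Fin (p - 1)) (Fin (p - 1)) ℤ) ⊗ₖ pathLap ℤ (q - 1)).map (↑) =
      pathLap ℝ (p - 1) ⊗ₖ (1 : Matrix (Fin (q - 1)) (Fin (q - 1)) ℝ) +
        (1 : Matrix (Fin (p - 1)) (Fin (p - 1)) ℝ) ⊗ₖ pathLap ℝ (q - 1) := by
    ext ⟨j, k⟩ ⟨j', k'⟩
    simp [← pathLap_map (Int.castRingHom ℝ), one_apply, apply_ite (Int.cast : ℤ → ℝ)]
  rw [h_real]
  exact det_kroneckerSum_of_mul_eq_mul_diagonal (isUnit_pathEigenvectors p)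
    (isUnit_pathEigenvectors q) (pathLap_mul_pathEigenvectors p) (pathLap_mul_pathEigenvectors q)

theorem gammaRect_dvd (m n p q : ℕ)
    (hm : 0 < m) (hn : 0 < n) :
    gammaRect p q ∣ gammaRect (m * p) (n * q) := by
  obtain ⟨e₁, he₁⟩ := exists_embedding_pathEigenvalue_mul hm p
  obtain ⟨e₂, he₂⟩ := exists_embedding_pathEigenvalue_mul hn q
  refine (abs_dvd_abs _ _).mpr <| Int.dvd_of_cast_eq_prod_comp_embedding
    (f := fun jk : Fin (m * p - 1) × Fin (n * q - 1) =>
      pathEigenvalue (m * p) jk.1 + pathEigenvalue (n * q) jk.2)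
    (fun jk => (isIntegral_pathEigenvalue _ jk.1).add (isIntegral_pathEigenvalue _ jk.2))
    (e₁.prodMap e₂) ?_ (rectLap_det_eq_prod _ _)
  simp only [rectLap_det_eq_prod, Function.Embedding.coe_prodMap, Prod.map_fst, Prod.map_snd, he₁,
    he₂]
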